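/- arXiv:2105.13925 — 6 statements merged into one kernel-verified Lean document; each statement's English description precedes it below -/
import Mathlib

section
/- For every real number x with 0 < x < π, one has 1/(sin x)^2 − 1/x^2 ≥ 1/3. -/
open Real

private lemma aux_sub_cube_le_sin : ∀ x : ℝ, 0 ≤ x → x - x ^ 3 / 6 ≤ Real.sin x := by
  have hd : ∀ x : ℝ, HasDerivAt (fun y => Real.sin y - (y - y ^ 3 / 6))
      (Real.cos x - (1 - 3 * x ^ 2 / 6)) x := by
    intro x
    have h1 := (Real.hasDerivAt_sin x)
    have h2 : HasDerivAt (fun y : ℝ => y - y ^ 3 / 6) (1 - 3 * x ^ 2 / 6) x := by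
      have := ((hasDerivAt_pow 3 x).div_const 6)
      exact ((hasDerivAt_id' x).sub this).congr_deriv (by norm_num)
    exact h1.sub h2
  have hmono : MonotoneOn (fun y => Real.sin y - (y - y ^ 3 / 6)) (Set.Ici 0) := by
    apply monotoneOn_of_deriv_nonneg (convex_Ici 0)
    · exact (Continuous.sub Real.continuous_sin (by continuity)).continuousOn
    · intro y hy
      exact (hd y).differentiableAt.differentiableWithinAt
    · intro y hy
      rw [(hd y).deriv]
      have hy0 : 0 ≤ y := le_of_lt (by simpa using hy)
      nlinarith [Real.one_sub_sq_div_two_le_cos (x := y)]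
  intro x hx
  have := hmono (Set.self_mem_Ici) hx hx
  simpa using this

private lemma aux_cos_le_quartic : ∀ x : ℝ, 0 ≤ x → Real.cos x ≤ 1 - x ^ 2 / 2 + x ^ 4 / 24 := by
  have hd : ∀ x : ℝ, HasDerivAt (fun y => (1 - y ^ 2 / 2 + y ^ 4 / 24) - Real.cos y)
      ((-x + 4 * x ^ 3 / 24) - (-Real.sin x)) x := by
    intro x
    have h2 : HasDerivAt (fun y : ℝ => 1 - y ^ 2 / 2 + y ^ 4 / 24)
        (-x + 4 * x ^ 3 / 24) x := by
      have ha := ((hasDerivAt_pow 2 x).div_const 2)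
      have hb := ((hasDerivAt_pow 4 x).div_const 24)
      exact (((hasDerivAt_const x (1 : ℝ)).sub ha).add hb).congr_deriv (by norm_num)
    exact h2.sub (Real.hasDerivAt_cos x)
  have hmono : MonotoneOn (fun y => (1 - y ^ 2 / 2 + y ^ 4 / 24) - Real.cos y) (Set.Ici 0) := by
    apply monotoneOn_of_deriv_nonneg (convex_Ici 0)
    · exact (Continuous.sub (by continuity) Real.continuous_cos).continuousOn
    · intro y hy
      exact (hd y).differentiableAt.differentiableWithinAt
    · intro y hy
      rw [(hd y).deriv]
      have hy0 : 0 ≤ y := le_of_lt (by simpa using hy)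
      have := aux_sub_cube_le_sin y hy0
      nlinarith
  intro x hx
  have := hmono (Set.self_mem_Ici) hx hx
  simp only [Set.mem_Ici] at this
  have h0 : ((1:ℝ) - 0 ^ 2 / 2 + 0 ^ 4 / 24) - Real.cos 0 = 0 := by simp
  simp only [h0] at this
  linarith [this]

private lemma aux_sin_le_quintic : ∀ x : ℝ, 0 ≤ x →
    Real.sin x ≤ x - x ^ 3 / 6 + x ^ 5 / 120 := by
  have hd : ∀ x : ℝ, HasDerivAt (fun y => (y - y ^ 3 / 6 + y ^ 5 / 120) - Real.sin y)
      ((1 - 3 * x ^ 2 / 6 + 5 * x ^ 4 / 120) - Real.cos x) x := by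
    intro x
    have h2 : HasDerivAt (fun y : ℝ => y - y ^ 3 / 6 + y ^ 5 / 120)
        (1 - 3 * x ^ 2 / 6 + 5 * x ^ 4 / 120) x := by
      have ha := ((hasDerivAt_pow 3 x).div_const 6)
      have hb := ((hasDerivAt_pow 5 x).div_const 120)
      exact (((hasDerivAt_id' x).sub ha).add hb).congr_deriv (by norm_num)
    exact h2.sub (Real.hasDerivAt_sin x)
  have hmono : MonotoneOn (fun y => (y - y ^ 3 / 6 + y ^ 5 / 120) - Real.sin y) (Set.Ici 0) := by
    apply monotoneOn_of_deriv_nonneg (convex_Ici 0)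
    · exact (Continuous.sub (by continuity) Real.continuous_sin).continuousOn
    · intro y hy
      exact (hd y).differentiableAt.differentiableWithinAt
    · intro y hy
      rw [(hd y).deriv]
      have hy0 : 0 ≤ y := le_of_lt (by simpa using hy)
      have := aux_cos_le_quartic y hy0
      nlinarith
  intro x hx
  have := hmono (Set.self_mem_Ici) hx hx
  simp only [Set.mem_Ici] at this
  have h0 : ((0:ℝ) - 0 ^ 3 / 6 + 0 ^ 5 / 120) - Real.sin 0 = 0 := by simp
  simp only [h0] at this
  linarith [this]

theorem sin_sq_inv_sub_sq_inv_ge_third (x : ℝ) (hx : 0 < x) (hx' : x < π) :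
    1 / (Real.sin x) ^ 2 - 1 / x ^ 2 ≥ 1 / 3 := by
  have hsin : 0 < Real.sin x := Real.sin_pos_of_pos_of_lt_pi hx hx'
  have hs2 : (0:ℝ) < Real.sin x ^ 2 := by positivity
  have hx2 : (0:ℝ) < x ^ 2 := by positivity
  have key : Real.sin x ^ 2 * (3 + x ^ 2) ≤ 3 * x ^ 2 := by
    rcases le_or_gt x 1.23 with hle | hgt
    · have hq := aux_sin_le_quintic x hx.le
      have hu : x ^ 2 ≤ 1.513 := by nlinarith
      have hq2 : Real.sin x ^ 2 ≤ (x - x ^ 3 / 6 + x ^ 5 / 120) ^ 2 := by nlinarith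
      have hg : 13 * (x ^ 2) / 360 + (x ^ 2) ^ 3 / 14400 ≤
          1 / 5 + 37 * (x ^ 2) ^ 2 / 14400 := by nlinarith [sq_nonneg x, sq_nonneg (x ^ 2)]
      have hx6 : (0:ℝ) ≤ x ^ 6 := by positivity
      have hpoly : (x - x ^ 3 / 6 + x ^ 5 / 120) ^ 2 * (3 + x ^ 2) ≤ 3 * x ^ 2 := by
        nlinarith [mul_le_mul_of_nonneg_left hg hx6]
      have := mul_le_mul_of_nonneg_right hq2 (by positivity : (0:ℝ) ≤ 3 + x ^ 2)
      linarith
    · have hs1 : Real.sin x ≤ 1 := Real.sin_le_one x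
      have hx15 : (3:ℝ)/2 ≤ x ^ 2 := by nlinarith
      have h1 : Real.sin x ^ 2 ≤ 1 := by nlinarith
      have := mul_le_mul_of_nonneg_right h1 (by positivity : (0:ℝ) ≤ 3 + x ^ 2)
      nlinarith
  rw [ge_iff_le, div_sub_div _ _ (ne_of_gt hs2) (ne_of_gt hx2), le_div_iff₀ (by positivity)]
  nlinarith [key]
end

section
/- For every real number x with 0 < x ≤ π/2, one has 1/(sin x)^2 − 1/x^2 ≤ 1 − 4/π^2. -/
open Real

lemma aux_sin_ge {t : ℝ} (ht : 0 ≤ t) : t - t ^ 3 / 6 ≤ Real.sin t := by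
  have hg : ∀ s : ℝ, HasDerivAt (fun u => Real.sin u - u + u ^ 3 / 6)
      (Real.cos s - 1 + s ^ 2 / 2) s := by
    intro s
    have h1 := Real.hasDerivAt_sin s
    have h2 := (hasDerivAt_pow 3 s).div_const 6
    have h3 := (h1.sub (hasDerivAt_id s)).add h2
    refine h3.congr_deriv ?_
    push_cast; ring
  have hmono : Monotone (fun u => Real.sin u - u + u ^ 3 / 6) :=
    monotone_of_deriv_nonneg (fun s => (hg s).differentiableAt) (fun s => by
      rw [(hg s).deriv]
      nlinarith [Real.one_sub_sq_div_two_le_cos (x := s)])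
  have h := hmono ht
  simp only [Real.sin_zero] at h
  nlinarith [h]

lemma aux_cos_le {t : ℝ} (ht : 0 ≤ t) : Real.cos t ≤ 1 - t ^ 2 / 2 + t ^ 4 / 24 := by
  have hg : ∀ s : ℝ, HasDerivAt (fun u => 1 - u ^ 2 / 2 + u ^ 4 / 24 - Real.cos u)
      (-s + s ^ 3 / 6 + Real.sin s) s := by
    intro s
    have h1 := Real.hasDerivAt_cos s
    have h2 := (hasDerivAt_pow 2 s).div_const 2
    have h3 := (hasDerivAt_pow 4 s).div_const 24
    have h4 := (((hasDerivAt_const s (1 : ℝ)).sub h2).add h3).sub h1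
    refine h4.congr_deriv ?_
    push_cast; ring
  have hmono : MonotoneOn (fun u => 1 - u ^ 2 / 2 + u ^ 4 / 24 - Real.cos u) (Set.Ici 0) := by
    apply monotoneOn_of_deriv_nonneg (convex_Ici 0)
    · exact fun s _ => (hg s).continuousAt.continuousWithinAt
    · exact fun s _ => ((hg s).differentiableAt).differentiableWithinAt
    · intro s hs
      rw [interior_Ici] at hs
      rw [(hg s).deriv]
      have := aux_sin_ge (le_of_lt hs)
      linarith
  have h := hmono (Set.self_mem_Ici) (Set.mem_Ici.2 ht) ht
  simp only [Real.cos_zero] at h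
  nlinarith [h]

lemma aux_cube {t : ℝ} (ht : 0 < t) (ht' : t < π / 2) :
    t ^ 3 * Real.cos t ≤ Real.sin t ^ 3 := by
  have hpi : π < 3.15 := Real.pi_lt_d2
  have ht2 : t ^ 2 < 6 := by nlinarith
  have hs := aux_sin_ge ht.le
  have hc := aux_cos_le ht.le
  have hs0 : 0 ≤ t - t ^ 3 / 6 := by nlinarith
  have hcube : (t - t ^ 3 / 6) ^ 3 ≤ Real.sin t ^ 3 := pow_le_pow_left₀ hs0 hs 3
  nlinarith [hcube, sq_nonneg t, pow_pos ht 3, pow_pos ht 5, pow_pos ht 7]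

theorem sin_sq_inv_sub_sq_inv_le (x : ℝ) (hx : 0 < x) (hx' : x ≤ π / 2) :
    1 / (Real.sin x) ^ 2 - 1 / x ^ 2 ≤ 1 - 4 / π ^ 2 := by
  have hπ := Real.pi_pos
  set f : ℝ → ℝ := fun t => 1 / Real.sin t ^ 2 - 1 / t ^ 2 with hf
  have hval : f (π / 2) = 1 - 4 / π ^ 2 := by
    simp only [hf, Real.sin_pi_div_two, one_pow]
    rw [show (π / 2) ^ 2 = π ^ 2 / 4 by ring, one_div_div]
    norm_num
  have key : f x ≤ f (π / 2) := by
    rcases eq_or_lt_of_le hx' with h | h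
    · rw [h]
    · have hmono : MonotoneOn f (Set.Icc x (π / 2)) := by
        apply monotoneOn_of_deriv_nonneg (convex_Icc _ _)
        · apply ContinuousOn.sub
          · apply ContinuousOn.div continuousOn_const
              (Real.continuous_sin.continuousOn.pow 2)
            intro t htm
            have h1 : 0 < Real.sin t := Real.sin_pos_of_pos_of_lt_pi (lt_of_lt_of_le hx htm.1)
              (lt_of_le_of_lt htm.2 (by linarith))
            exact pow_ne_zero 2 h1.ne'
          · apply ContinuousOn.div continuousOn_const (continuousOn_pow 2)
            intro t htm
            have h1 : 0 < t := lt_of_lt_of_le hx htm.1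
            positivity
        · intro t htm
          rw [interior_Icc] at htm
          have ht0 : 0 < t := lt_trans hx htm.1
          have hs0 : 0 < Real.sin t := Real.sin_pos_of_pos_of_lt_pi ht0
            (lt_trans htm.2 (by linarith))
          have hd : HasDerivAt f
              ((0 * Real.sin t ^ 2 - 1 * (↑2 * Real.sin t ^ 1 * Real.cos t)) / (Real.sin t ^ 2) ^ 2
               - (0 * t ^ 2 - 1 * (↑2 * t ^ 1)) / (t ^ 2) ^ 2) t := by
            exact ((hasDerivAt_const t (1:ℝ)).div ((Real.hasDerivAt_sin t).pow 2)
              (pow_ne_zero 2 hs0.ne')).sub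
              (((hasDerivAt_const t (1:ℝ)).div (hasDerivAt_pow 2 t) (by positivity)))
          exact hd.differentiableAt.differentiableWithinAt
        · intro t htm
          rw [interior_Icc] at htm
          have ht0 : 0 < t := lt_trans hx htm.1
          have hs0 : 0 < Real.sin t := Real.sin_pos_of_pos_of_lt_pi ht0
            (lt_trans htm.2 (by linarith))
          have hd : HasDerivAt f
              ((0 * Real.sin t ^ 2 - 1 * (↑2 * Real.sin t ^ 1 * Real.cos t)) / (Real.sin t ^ 2) ^ 2
               - (0 * t ^ 2 - 1 * (↑2 * t ^ 1)) / (t ^ 2) ^ 2) t := by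
            exact ((hasDerivAt_const t (1:ℝ)).div ((Real.hasDerivAt_sin t).pow 2)
              (pow_ne_zero 2 hs0.ne')).sub
              (((hasDerivAt_const t (1:ℝ)).div (hasDerivAt_pow 2 t) (by positivity)))
          rw [hd.deriv]
          have hcube := aux_cube ht0 htm.2
          have h1 : (0 * Real.sin t ^ 2 - 1 * (↑2 * Real.sin t ^ 1 * Real.cos t))
              / (Real.sin t ^ 2) ^ 2 = -(2 * Real.cos t) / Real.sin t ^ 3 := by
            field_simp; ring
          have h2 : (0 * t ^ 2 - 1 * (↑2 * t ^ 1)) / (t ^ 2) ^ 2 = -2 / t ^ 3 := by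
            field_simp; ring
          rw [h1, h2]
          rw [sub_nonneg, div_le_div_iff₀ (by positivity) (by positivity)]
          nlinarith [hcube, pow_pos hs0 3, pow_pos ht0 3]
      exact hmono (Set.mem_Icc.2 ⟨le_refl x, hx'⟩)
        (Set.mem_Icc.2 ⟨hx', le_refl _⟩) hx'
  rw [hval] at key
  exact key
end

section
/- For every natural number n ≥ 3 and every real number x with 0 < x < π, one has n(n−1)/6 + ((n−1)(n−3)/4)·(1/(sin x)^2 − 1/x^2) − (n−1)^2/4 ≥ 0. -/
open Real

private lemma mono_aux (f f' : ℝ → ℝ) (hf : ∀ t, HasDerivAt f (f' t) t)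
    (h0 : f 0 = 0) (hd : ∀ t, 0 ≤ t → 0 ≤ f' t) {x : ℝ} (hx : 0 ≤ x) :
    0 ≤ f x := by
  have hmono : MonotoneOn f (Set.Ici (0 : ℝ)) := by
    apply monotoneOn_of_deriv_nonneg (convex_Ici 0)
    · exact fun t _ => (hf t).continuousAt.continuousWithinAt
    · intro t _
      exact (hf t).differentiableAt.differentiableWithinAt
    · intro t ht
      rw [interior_Ici] at ht
      rw [(hf t).deriv]
      exact hd t (le_of_lt ht)
  calc 0 = f 0 := h0.symm
    _ ≤ f x := hmono Set.self_mem_Ici hx hx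

private lemma sin_ge_cubic {x : ℝ} (hx : 0 ≤ x) : x - x ^ 3 / 6 ≤ sin x := by
  have := mono_aux (fun t => sin t - (t - t ^ 3 / 6))
    (fun t => cos t - (1 - t ^ 2 / 2))
    (by
      intro t
      have h1 : HasDerivAt (fun t : ℝ => t - t ^ 3 / 6) (1 - t ^ 2 / 2) t := by
        have := ((hasDerivAt_pow 3 t).div_const 6)
        have h2 := (hasDerivAt_id t).sub this
        exact h2.congr_deriv (by norm_num <;> ring)
      exact (Real.hasDerivAt_sin t).sub h1)
    (by norm_num)
    (by
      intro t _
      have := Real.one_sub_sq_div_two_le_cos (x := t)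
      linarith)
    hx
  simpa using this

private lemma cos_le_quartic {x : ℝ} (hx : 0 ≤ x) : cos x ≤ 1 - x ^ 2 / 2 + x ^ 4 / 24 := by
  have := mono_aux (fun t => 1 - t ^ 2 / 2 + t ^ 4 / 24 - cos t)
    (fun t => sin t - (t - t ^ 3 / 6))
    (by
      intro t
      have h1 : HasDerivAt (fun t : ℝ => 1 - t ^ 2 / 2 + t ^ 4 / 24)
          (-(t - t ^ 3 / 6)) t := by
        have h2 := (((hasDerivAt_pow 2 t).div_const 2).const_sub 1).add
          ((hasDerivAt_pow 4 t).div_const 24)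
        exact h2.congr_deriv (by norm_num <;> ring)
      have := h1.sub (Real.hasDerivAt_cos t)
      exact this.congr_deriv (by ring))
    (by norm_num)
    (by
      intro t ht
      have := sin_ge_cubic ht
      linarith)
    hx
  simpa using this

private lemma sin_le_quintic {x : ℝ} (hx : 0 ≤ x) :
    sin x ≤ x - x ^ 3 / 6 + x ^ 5 / 120 := by
  have := mono_aux (fun t => t - t ^ 3 / 6 + t ^ 5 / 120 - sin t)
    (fun t => 1 - t ^ 2 / 2 + t ^ 4 / 24 - cos t)
    (by
      intro t
      have h1 : HasDerivAt (fun t : ℝ => t - t ^ 3 / 6 + t ^ 5 / 120)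
          (1 - t ^ 2 / 2 + t ^ 4 / 24) t := by
        have h2 := ((hasDerivAt_id t).sub ((hasDerivAt_pow 3 t).div_const 6)).add
          ((hasDerivAt_pow 5 t).div_const 120)
        exact h2.congr_deriv (by norm_num <;> ring)
      exact h1.sub (Real.hasDerivAt_sin t))
    (by norm_num)
    (by
      intro t ht
      have := cos_le_quartic ht
      linarith)
    hx
  simpa using this

private lemma key_ineq {x : ℝ} (hx : 0 < x) (hx' : x < π) :
    1 / 3 ≤ 1 / (Real.sin x) ^ 2 - 1 / x ^ 2 := by
  have hs : 0 < sin x := Real.sin_pos_of_pos_of_lt_pi hx hx'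
  have hp : sin x ≤ x - x ^ 3 / 6 + x ^ 5 / 120 := sin_le_quintic hx.le
  -- key polynomial estimate: (3 + x^2) * p^2 ≤ 3 * x^2 for 0 < x < π
  have hxpi : x ^ 2 ≤ 10 := by
    nlinarith [Real.pi_lt_d2, Real.pi_gt_three]
  have hpoly : (3 + x ^ 2) * (x - x ^ 3 / 6 + x ^ 5 / 120) ^ 2 ≤ 3 * x ^ 2 := by
    nlinarith [sq_nonneg x, sq_nonneg (x ^ 2), sq_nonneg (x ^ 3),
      mul_nonneg (mul_nonneg (sq_nonneg (x ^ 2)) (sq_nonneg x)) (sub_nonneg.mpr hxpi),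
      mul_nonneg (sq_nonneg (x ^ 2)) (sub_nonneg.mpr hxpi),
      sq_nonneg (x ^ 2 - 27 / 2), mul_nonneg (sq_nonneg (x*x)) hx.le]
  have hs2 : (3 + x ^ 2) * Real.sin x ^ 2 ≤ 3 * x ^ 2 := by
    have hsq : Real.sin x ^ 2 ≤ (x - x ^ 3 / 6 + x ^ 5 / 120) ^ 2 :=
      pow_le_pow_left₀ hs.le hp 2
    nlinarith [sq_nonneg x]
  have hs2' : (0 : ℝ) < Real.sin x ^ 2 := by positivity
  have hx2 : (0 : ℝ) < x ^ 2 := by positivity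
  rw [div_sub_div _ _ (ne_of_gt hs2') (ne_of_gt hx2), le_div_iff₀ (by positivity)]
  nlinarith

theorem supersolution_coefficient_nonneg (n : ℕ) (hn : 3 ≤ n) (x : ℝ)
    (hx : 0 < x) (hx' : x < π) :
    (n : ℝ) * ((n : ℝ) - 1) / 6
      + ((n : ℝ) - 1) * ((n : ℝ) - 3) / 4 * (1 / (Real.sin x) ^ 2 - 1 / x ^ 2)
      - ((n : ℝ) - 1) ^ 2 / 4 ≥ 0 := by
  have hkey := key_ineq hx hx'
  have hn3 : (3 : ℝ) ≤ (n : ℝ) := by exact_mod_cast hn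
  have h1 : (0 : ℝ) ≤ ((n : ℝ) - 1) * ((n : ℝ) - 3) := by nlinarith
  have h2 : ((n : ℝ) - 1) * ((n : ℝ) - 3) / 4 * (1 / 3)
      ≤ ((n : ℝ) - 1) * ((n : ℝ) - 3) / 4 * (1 / (Real.sin x) ^ 2 - 1 / x ^ 2) := by
    apply mul_le_mul_of_nonneg_left hkey (by linarith)
  nlinarith
end

section
/- Let b > 0 and set λ* = b²/2. Define H(t,r) = (4πt)^{−1} · (b r / sin(b r))^{1/2} · exp(−r²/(4t)) · exp(λ* t). Then for every t > 0 and every r with 0 < r < π/(2b), one has ∂_t H(t,r) − ∂²_{rr} H(t,r) − b (cos(b r)/sin(b r)) ∂_r H(t,r) ≥ 0. -/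
open Real Set

lemma aux_hasDerivAt_r (b t lam : ℝ) (hb : 0 < b) (ht : 0 < t)
    {ρ : ℝ} (h1 : 0 < ρ) (h2 : ρ < π / (2 * b)) :
    HasDerivAt (fun x : ℝ => (4 * π * t)⁻¹ * (b * x / Real.sin (b * x)) ^ ((1:ℝ)/2)
        * Real.exp (-x ^ 2 / (4 * t)) * Real.exp (lam * t))
      (((4 * π * t)⁻¹ * (b * ρ / Real.sin (b * ρ)) ^ ((1:ℝ)/2)
        * Real.exp (-ρ ^ 2 / (4 * t)) * Real.exp (lam * t))
        * ((1/2) * (1/ρ - b * Real.cos (b * ρ) / Real.sin (b * ρ)) - ρ / (2 * t))) ρ := by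
  have hbρ : 0 < b * ρ := mul_pos hb h1
  have hbρ2 : b * ρ < π / 2 := by
    have h := mul_lt_mul_of_pos_left h2 hb
    have e : b * (π / (2 * b)) = π / 2 := by field_simp
    linarith [e ▸ h]
  have hs : 0 < Real.sin (b * ρ) :=
    Real.sin_pos_of_pos_of_lt_pi hbρ (lt_trans hbρ2 (by linarith [Real.pi_pos]))
  have hsne : Real.sin (b * ρ) ≠ 0 := ne_of_gt hs
  have hq : 0 < b * ρ / Real.sin (b * ρ) := div_pos hbρ hs
  -- derivative of q
  have hlin : HasDerivAt (fun x : ℝ => b * x) b ρ := by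
    simpa using (hasDerivAt_id ρ).const_mul b
  have hsin : HasDerivAt (fun x : ℝ => Real.sin (b * x)) (Real.cos (b * ρ) * b) ρ :=
    (Real.hasDerivAt_sin (b * ρ)).comp ρ hlin
  have hqd : HasDerivAt (fun x : ℝ => b * x / Real.sin (b * x))
      ((b * Real.sin (b * ρ) - b * ρ * (Real.cos (b * ρ) * b)) / Real.sin (b * ρ) ^ 2) ρ :=
    hlin.div hsin hsne
  have hG : HasDerivAt (fun x : ℝ => (b * x / Real.sin (b * x)) ^ ((1:ℝ)/2))
      ((b * Real.sin (b * ρ) - b * ρ * (Real.cos (b * ρ) * b)) / Real.sin (b * ρ) ^ 2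
        * ((1:ℝ)/2) * (b * ρ / Real.sin (b * ρ)) ^ ((1:ℝ)/2 - 1)) ρ :=
    hqd.rpow_const (Or.inl (ne_of_gt hq))
  have hEarg : HasDerivAt (fun x : ℝ => -x ^ 2 / (4 * t)) (-(2 * ρ) / (4 * t)) ρ := by
    simpa using ((hasDerivAt_pow 2 ρ).neg.div_const (4 * t))
  have hE : HasDerivAt (fun x : ℝ => Real.exp (-x ^ 2 / (4 * t)))
      (Real.exp (-ρ ^ 2 / (4 * t)) * (-(2 * ρ) / (4 * t))) ρ := hEarg.exp
  have := (((hG.const_mul ((4 * π * t)⁻¹)).mul hE).mul_const (Real.exp (lam * t)))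
  refine this.congr_deriv ?_
  rw [Real.rpow_sub_one (ne_of_gt hq)]
  have hπ : (0:ℝ) < π := Real.pi_pos
  field_simp
  ring

lemma aux_hasDerivAt_t (lam c r t : ℝ) (ht : 0 < t) :
    HasDerivAt (fun s : ℝ => (4 * π * s)⁻¹ * c * Real.exp (-r ^ 2 / (4 * s)) * Real.exp (lam * s))
      (((4 * π * t)⁻¹ * c * Real.exp (-r ^ 2 / (4 * t)) * Real.exp (lam * t))
        * (lam - 1 / t + r ^ 2 / (4 * t ^ 2))) t := by
  have hπ : (0:ℝ) < π := Real.pi_pos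
  have hne : (4 * π * t) ≠ 0 := by positivity
  have hlin : HasDerivAt (fun s : ℝ => 4 * π * s) (4 * π) t := by
    simpa using (hasDerivAt_id t).const_mul (4 * π)
  have hA : HasDerivAt (fun s : ℝ => (4 * π * s)⁻¹) (-(4 * π) / (4 * π * t) ^ 2) t :=
    hlin.inv hne
  have hlin2 : HasDerivAt (fun s : ℝ => 4 * s) 4 t := by
    simpa using (hasDerivAt_id t).const_mul 4
  have h4ne : (4 * t) ≠ 0 := by positivity
  have hinner : HasDerivAt (fun s : ℝ => -r ^ 2 / (4 * s))
      (-(-r ^ 2) * 4 / (4 * t) ^ 2) t := by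
    have := (hasDerivAt_const t (-r ^ 2)).div hlin2 h4ne
    exact this.congr_deriv (by ring)
  have hEt : HasDerivAt (fun s : ℝ => Real.exp (-r ^ 2 / (4 * s)))
      (Real.exp (-r ^ 2 / (4 * t)) * (-(-r ^ 2) * 4 / (4 * t) ^ 2)) t := hinner.exp
  have hL : HasDerivAt (fun s : ℝ => Real.exp (lam * s)) (Real.exp (lam * t) * lam) t := by
    have hl : HasDerivAt (fun s : ℝ => lam * s) lam t := by
      simpa using (hasDerivAt_id t).const_mul lam
    exact hl.exp
  have := ((hA.mul_const c).mul hEt).mul hL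
  refine this.congr_deriv ?_
  simp only [Pi.mul_apply]
  field_simp
  ring

lemma aux_hasDerivAt_P (b t : ℝ) (hb : 0 < b) (ht : 0 < t)
    {ρ : ℝ} (h1 : 0 < ρ) (hs : 0 < Real.sin (b * ρ)) :
    HasDerivAt (fun x : ℝ => (1/2) * (1/x - b * Real.cos (b * x) / Real.sin (b * x)) - x / (2 * t))
      (-(1 / (2 * ρ ^ 2)) + b ^ 2 / (2 * Real.sin (b * ρ) ^ 2) - 1 / (2 * t)) ρ := by
  have hsne := ne_of_gt hs
  have hlin : HasDerivAt (fun x : ℝ => b * x) b ρ := by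
    simpa using (hasDerivAt_id ρ).const_mul b
  have hcos : HasDerivAt (fun x : ℝ => b * Real.cos (b * x)) (b * (-Real.sin (b * ρ) * b)) ρ :=
    (((Real.hasDerivAt_cos (b * ρ)).comp ρ hlin).const_mul b).congr_deriv (by ring)
  have hsin : HasDerivAt (fun x : ℝ => Real.sin (b * x)) (Real.cos (b * ρ) * b) ρ :=
    (Real.hasDerivAt_sin (b * ρ)).comp ρ hlin
  have hcot : HasDerivAt (fun x : ℝ => b * Real.cos (b * x) / Real.sin (b * x))
      ((b * (-Real.sin (b * ρ) * b) * Real.sin (b * ρ)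
        - b * Real.cos (b * ρ) * (Real.cos (b * ρ) * b)) / Real.sin (b * ρ) ^ 2) ρ :=
    hcos.div hsin hsne
  have hinv : HasDerivAt (fun x : ℝ => 1 / x) (-(ρ ^ 2)⁻¹) ρ := by
    simpa [one_div] using hasDerivAt_inv (ne_of_gt h1)
  have hlast : HasDerivAt (fun x : ℝ => x / (2 * t)) (1 / (2 * t)) ρ := by
    simpa using (hasDerivAt_id ρ).div_const (2 * t)
  have := (((hinv.sub hcot).const_mul (1/2 : ℝ)).sub hlast)
  have hpyth : Real.sin (b * ρ) ^ 2 + Real.cos (b * ρ) ^ 2 = 1 := Real.sin_sq_add_cos_sq _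
  have key : b * (-Real.sin (b * ρ) * b) * Real.sin (b * ρ)
      - b * Real.cos (b * ρ) * (Real.cos (b * ρ) * b) = -b ^ 2 := by
    linear_combination (-(b ^ 2)) * hpyth
  refine this.congr_deriv ?_
  rw [key]
  field_simp
  ring

set_option maxHeartbeats 1600000 in
theorem heat_kernel_comparison_supersolution_dim_two (b : ℝ) (hb : 0 < b)
    (lam : ℝ) (hlam : lam = b ^ 2 / 2)
    (H : ℝ → ℝ → ℝ)
    (hH : ∀ t r, H t r =
      (4 * π * t)⁻¹ * (b * r / Real.sin (b * r)) ^ ((1 : ℝ) / 2)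
        * Real.exp (-r ^ 2 / (4 * t)) * Real.exp (lam * t)) :
    ∀ t : ℝ, 0 < t → ∀ r : ℝ, 0 < r → r < π / (2 * b) →
      deriv (fun s => H s r) t - deriv (deriv (fun ρ => H t ρ)) r
        - b * (Real.cos (b * r) / Real.sin (b * r)) * deriv (fun ρ => H t ρ) r ≥ 0 := by
  intro t ht r hr1 hr2
  have hπ : (0:ℝ) < π := Real.pi_pos
  have hbr : 0 < b * r := mul_pos hb hr1
  have hbr2 : b * r < π / 2 := by
    have h := mul_lt_mul_of_pos_left hr2 hb
    have e : b * (π / (2 * b)) = π / 2 := by field_simp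
    linarith [e ▸ h]
  have hs : 0 < Real.sin (b * r) :=
    Real.sin_pos_of_pos_of_lt_pi hbr (lt_trans hbr2 (by linarith))
  have hc : 0 < Real.cos (b * r) := Real.cos_pos_of_mem_Ioo ⟨by linarith, hbr2⟩
  have hpyth : Real.sin (b * r) ^ 2 + Real.cos (b * r) ^ 2 = 1 := Real.sin_sq_add_cos_sq _
  simp only [hH]
  set s := Real.sin (b * r) with hsdef
  set c := Real.cos (b * r) with hcdef
  set Hv : ℝ := (4 * π * t)⁻¹ * (b * r / s) ^ ((1:ℝ)/2)
      * Real.exp (-r ^ 2 / (4 * t)) * Real.exp (lam * t) with hHv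
  set P : ℝ → ℝ :=
    fun x => (1/2) * (1/x - b * Real.cos (b * x) / Real.sin (b * x)) - x / (2 * t) with hP
  have hHpos : 0 < Hv := by
    apply mul_pos (mul_pos (mul_pos _ _) _)
    · exact Real.exp_pos _
    · positivity
    · exact Real.rpow_pos_of_pos (div_pos hbr hs) _
    · exact Real.exp_pos _
  -- time derivative
  have d1 : deriv (fun σ : ℝ => (4 * π * σ)⁻¹ * (b * r / s) ^ ((1:ℝ)/2)
        * Real.exp (-r ^ 2 / (4 * σ)) * Real.exp (lam * σ)) t
      = Hv * (lam - 1 / t + r ^ 2 / (4 * t ^ 2)) :=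
    (aux_hasDerivAt_t lam ((b * r / s) ^ ((1:ℝ)/2)) r t ht).deriv
  -- first space derivative at r
  have ddr : deriv (fun x : ℝ => (4 * π * t)⁻¹ * (b * x / Real.sin (b * x)) ^ ((1:ℝ)/2)
        * Real.exp (-x ^ 2 / (4 * t)) * Real.exp (lam * t)) r = Hv * P r :=
    (aux_hasDerivAt_r b t lam hb ht hr1 hr2).deriv
  -- second space derivative
  have hev : deriv (fun x : ℝ => (4 * π * t)⁻¹ * (b * x / Real.sin (b * x)) ^ ((1:ℝ)/2)
        * Real.exp (-x ^ 2 / (4 * t)) * Real.exp (lam * t))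
      =ᶠ[nhds r] fun ρ : ℝ => ((4 * π * t)⁻¹ * (b * ρ / Real.sin (b * ρ)) ^ ((1:ℝ)/2)
        * Real.exp (-ρ ^ 2 / (4 * t)) * Real.exp (lam * t)) * P ρ := by
    filter_upwards [Ioo_mem_nhds hr1 hr2] with ρ hρ
    exact (aux_hasDerivAt_r b t lam hb ht hρ.1 hρ.2).deriv
  have d2 : deriv (deriv (fun x : ℝ => (4 * π * t)⁻¹ * (b * x / Real.sin (b * x)) ^ ((1:ℝ)/2)
        * Real.exp (-x ^ 2 / (4 * t)) * Real.exp (lam * t))) r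
      = Hv * P r * P r
        + Hv * (-(1 / (2 * r ^ 2)) + b ^ 2 / (2 * s ^ 2) - 1 / (2 * t)) := by
    rw [hev.deriv_eq]
    exact ((aux_hasDerivAt_r b t lam hb ht hr1 hr2).mul
      (aux_hasDerivAt_P b t hb ht hr1 hs)).deriv
  rw [d1, d2, ddr]
  have hPr : P r = (1/2) * (1/r - b * c / s) - r / (2 * t) := by rw [hP]
  have hfac : Hv * (lam - 1 / t + r ^ 2 / (4 * t ^ 2))
      - (Hv * P r * P r + Hv * (-(1 / (2 * r ^ 2)) + b ^ 2 / (2 * s ^ 2) - 1 / (2 * t)))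
      - b * (c / s) * (Hv * P r)
      = Hv * (b ^ 2 / 4 + 1 / (4 * r ^ 2) - b ^ 2 / (4 * s ^ 2)) := by
    rw [hPr, hlam]
    have hc2 : c ^ 2 = 1 - s ^ 2 := by linear_combination hpyth
    field_simp
    ring_nf
    rw [hc2]
    ring
  rw [hfac]
  -- positivity of the remaining factor
  have htan : b * r * c < s := by
    have h := Real.lt_tan hbr hbr2
    rw [Real.tan_eq_sin_div_cos] at h
    calc b * r * c < (s / c) * c := by exact mul_lt_mul_of_pos_right h hc
    _ = s := by field_simp
  have h4 : b ^ 2 * r ^ 2 * c ^ 2 ≤ s ^ 2 := by nlinarith [htan, mul_pos hbr hc]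
  have hX : 0 ≤ b ^ 2 / 4 + 1 / (4 * r ^ 2) - b ^ 2 / (4 * s ^ 2) := by
    have e : b ^ 2 / 4 + 1 / (4 * r ^ 2) - b ^ 2 / (4 * s ^ 2)
        = (b ^ 2 * r ^ 2 * s ^ 2 + s ^ 2 - b ^ 2 * r ^ 2) / (4 * r ^ 2 * s ^ 2) := by
      field_simp
    rw [e]
    apply div_nonneg _ (by positivity)
    have h5 : b ^ 2 * r ^ 2 * s ^ 2 + b ^ 2 * r ^ 2 * c ^ 2 = b ^ 2 * r ^ 2 := by
      linear_combination (b ^ 2 * r ^ 2) * hpyth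
    linarith [h4, h5]
  exact mul_nonneg hHpos.le hX
end

section
/- Let n ≥ 1 be a natural number, let 0 < r ≤ 1, and let A ⊆ ℝⁿ be a measurable set with λ(A) ≤ λ(B_r(0)) such that y ↦ log(1/‖y‖) is Lebesgue-integrable on A. Then ∫_A log(1/‖y‖) dy ≤ ∫_{B_r(0)} log(1/‖y‖) dy. -/
open Real MeasureTheory

-- integrability of log(1/‖y‖) on a ball
lemma log_integrableOn_ball (n : ℕ) (hn : 1 ≤ n) (r : ℝ) (hr : 0 < r) (hr' : r ≤ 1) :
    IntegrableOn (fun y : EuclideanSpace ℝ (Fin n) => Real.log (1 / ‖y‖))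
      (Metric.ball (0 : EuclideanSpace ℝ (Fin n)) r) := by
  set f : EuclideanSpace ℝ (Fin n) → ℝ := fun y => Real.log (1 / ‖y‖) with hf
  have hmeas : Measurable f := (measurable_const.div measurable_norm).log
  have hnn : ∀ y ∈ Metric.ball (0 : EuclideanSpace ℝ (Fin n)) r, 0 ≤ f y := by
    intro y hy
    rcases eq_or_ne y 0 with rfl | hy0
    · simp [f]
    · have h1 : 0 < ‖y‖ := norm_pos_iff.mpr hy0
      have h2 : ‖y‖ < 1 := lt_of_lt_of_le (by simpa using hy) hr'
      have : (1:ℝ) ≤ 1 / ‖y‖ := one_le_one_div h1 h2.le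
      exact Real.log_nonneg this
  haveI : Nonempty (Fin n) := ⟨⟨0, hn⟩⟩
  haveI : Nontrivial (EuclideanSpace ℝ (Fin n)) := inferInstanceAs (Nontrivial (PiLp 2 fun _ : Fin n => ℝ))
  refine ⟨hmeas.aestronglyMeasurable, ?_⟩
  rw [hasFiniteIntegral_iff_norm]
  have hnn' : 0 ≤ᵐ[volume.restrict (Metric.ball (0 : EuclideanSpace ℝ (Fin n)) r)] f := by
    filter_upwards [ae_restrict_mem measurableSet_ball] with y hy using hnn y hy
  have hcong : ∫⁻ y in Metric.ball (0 : EuclideanSpace ℝ (Fin n)) r, ENNReal.ofReal ‖f y‖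
      = ∫⁻ y in Metric.ball (0 : EuclideanSpace ℝ (Fin n)) r, ENNReal.ofReal (f y) := by
    refine lintegral_congr_ae ?_
    filter_upwards [hnn'] with y hy
    rw [Real.norm_of_nonneg hy]
  rw [hcong, lintegral_eq_lintegral_meas_lt _ hnn' hmeas.aemeasurable]
  set V := volume (Metric.ball (0 : EuclideanSpace ℝ (Fin n)) 1) with hV
  have hVfin : V < ⊤ := measure_ball_lt_top
  have hbound : ∀ t : ℝ, 0 < t →
      (volume.restrict (Metric.ball (0 : EuclideanSpace ℝ (Fin n)) r)) {a | t < f a}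
        ≤ ENNReal.ofReal (Real.exp (-t) ^ n) * V := by
    intro t ht
    have hsub : {a : EuclideanSpace ℝ (Fin n) | t < f a}
        ⊆ Metric.ball 0 (Real.exp (-t)) := by
      intro y hy
      simp only [Set.mem_setOf_eq, f] at hy
      rcases eq_or_ne y 0 with rfl | hy0
      · simp at hy; linarith
      · have h1 : 0 < ‖y‖ := norm_pos_iff.mpr hy0
        have : Real.log ‖y‖ < -t := by
          have := hy
          rw [one_div, Real.log_inv] at this
          linarith
        have : ‖y‖ < Real.exp (-t) := by
          calc ‖y‖ = Real.exp (Real.log ‖y‖) := (Real.exp_log h1).symm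
          _ < Real.exp (-t) := Real.exp_lt_exp.mpr this
        simpa [mem_ball_zero_iff] using this
    calc (volume.restrict (Metric.ball (0 : EuclideanSpace ℝ (Fin n)) r)) {a | t < f a}
        ≤ volume {a : EuclideanSpace ℝ (Fin n) | t < f a} :=
          Measure.restrict_apply_le _ _
      _ ≤ volume (Metric.ball (0 : EuclideanSpace ℝ (Fin n)) (Real.exp (-t))) :=
          measure_mono hsub
      _ = ENNReal.ofReal (Real.exp (-t) ^ n) * V := by
          rw [Measure.addHaar_ball volume _ (Real.exp_nonneg _), finrank_euclideanSpace_fin]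
  calc ∫⁻ t in Set.Ioi (0:ℝ),
        (volume.restrict (Metric.ball (0 : EuclideanSpace ℝ (Fin n)) r)) {a | t < f a}
      ≤ ∫⁻ t in Set.Ioi (0:ℝ), ENNReal.ofReal (Real.exp (-(n:ℝ) * t)) * V := by
        refine lintegral_mono_ae ?_
        filter_upwards [ae_restrict_mem measurableSet_Ioi] with t ht
        have := hbound t ht
        have heq : Real.exp (-t) ^ n = Real.exp (-(n:ℝ) * t) := by
          rw [← Real.exp_nat_mul]; ring_nf
        rwa [heq] at this
    _ = (∫⁻ t in Set.Ioi (0:ℝ), ENNReal.ofReal (Real.exp (-(n:ℝ) * t))) * V :=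
        lintegral_mul_const _ ((ENNReal.measurable_ofReal.comp (by fun_prop)))
    _ < ⊤ := by
        refine ENNReal.mul_lt_top ?_ hVfin
        exact (exp_neg_integrableOn_Ioi 0 (by positivity : (0:ℝ) < n)).lintegral_lt_top

theorem log_integral_set_le_ball (n : ℕ) (hn : 1 ≤ n) (r : ℝ) (hr : 0 < r) (hr' : r ≤ 1)
    (A : Set (EuclideanSpace ℝ (Fin n))) (hA : MeasurableSet A)
    (hvol : volume A ≤ volume (Metric.ball (0 : EuclideanSpace ℝ (Fin n)) r))
    (hint : IntegrableOn (fun y : EuclideanSpace ℝ (Fin n) => Real.log (1 / ‖y‖)) A) :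
    ∫ y in A, Real.log (1 / ‖y‖)
      ≤ ∫ y in Metric.ball (0 : EuclideanSpace ℝ (Fin n)) r, Real.log (1 / ‖y‖) := by
  set f : EuclideanSpace ℝ (Fin n) → ℝ := fun y => Real.log (1 / ‖y‖) with hfdef
  set B : Set (EuclideanSpace ℝ (Fin n)) := Metric.ball 0 r with hBdef
  have hB : MeasurableSet B := measurableSet_ball
  have hBfin : volume B < ⊤ := measure_ball_lt_top
  haveI : Nonempty (Fin n) := ⟨⟨0, hn⟩⟩
  haveI : Nontrivial (EuclideanSpace ℝ (Fin n)) := inferInstanceAs (Nontrivial (PiLp 2 fun _ : Fin n => ℝ))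
  have hintB : IntegrableOn f B := log_integrableOn_ball n hn r hr hr'
  have hABfin : volume (A ∩ B) < ⊤ := lt_of_le_of_lt (measure_mono Set.inter_subset_right) hBfin
  -- measure comparison
  have hmeas_le : volume (A \ B) ≤ volume (B \ A) := by
    have h1 : volume (A ∩ B) + volume (A \ B) = volume A := measure_inter_add_diff A hB
    have h2 : volume (B ∩ A) + volume (B \ A) = volume B := measure_inter_add_diff B hA
    have h3 : volume (A ∩ B) + volume (A \ B) ≤ volume (A ∩ B) + volume (B \ A) := by
      rw [h1, Set.inter_comm, h2]; exact hvol
    exact (ENNReal.add_le_add_iff_left hABfin.ne).mp h3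
  have hdiffAfin : volume (A \ B) < ⊤ := by
    refine lt_of_le_of_lt (le_trans (measure_mono Set.diff_subset) hvol) hBfin
  have hdiffBfin : volume (B \ A) < ⊤ := lt_of_le_of_lt (measure_mono Set.diff_subset) hBfin
  have hlognn : 0 ≤ Real.log (1 / r) := Real.log_nonneg (one_le_one_div hr hr')
  -- ∫_{A\B} f ≤ log(1/r) * vol(A\B)
  have hub : ∫ y in A \ B, f y ≤ (volume (A \ B)).toReal * Real.log (1 / r) := by
    have : ∫ y in A \ B, f y ≤ ∫ _y in A \ B, Real.log (1 / r) := by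
      refine setIntegral_mono_on (hint.mono_set Set.diff_subset)
        ((integrableOn_const_iff (C := Real.log (1 / r))).mpr (Or.inr hdiffAfin)) (hA.diff hB) ?_
      intro y hy
      have hyr : r ≤ ‖y‖ := by
        by_contra h
        exact hy.2 (by simpa [hBdef, mem_ball_zero_iff] using lt_of_not_ge h)
      have h1 : 1 / ‖y‖ ≤ 1 / r := one_div_le_one_div_of_le hr hyr
      have h0 : (0:ℝ) < ‖y‖ := lt_of_lt_of_le hr hyr
      exact Real.log_le_log (by positivity) h1
    simpa [setIntegral_const, smul_eq_mul, measureReal_def] using this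
  -- log(1/r) * vol(B\A) ≤ ∫_{B\A} f
  have hlb : (volume (B \ A)).toReal * Real.log (1 / r) ≤ ∫ y in B \ A, f y := by
    have : ∫ _y in B \ A, Real.log (1 / r) ≤ ∫ y in B \ A, f y := by
      refine setIntegral_mono_ae_restrict ((integrableOn_const_iff (C := Real.log (1 / r))).mpr (Or.inr hdiffBfin))
        (hintB.mono_set Set.diff_subset) ?_
      have h0 : ∀ᵐ y ∂(volume.restrict (B \ A)), y ≠ (0 : EuclideanSpace ℝ (Fin n)) := by
        refine ae_restrict_of_ae ?_
        rw [ae_iff]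
        simpa using measure_singleton (0 : EuclideanSpace ℝ (Fin n))
      filter_upwards [ae_restrict_mem (hB.diff hA), h0] with y hy hy0
      have h1 : 0 < ‖y‖ := norm_pos_iff.mpr hy0
      have h2 : ‖y‖ < r := by simpa [hBdef, mem_ball_zero_iff] using hy.1
      exact Real.log_le_log (by positivity) (one_div_le_one_div_of_le h1 h2.le)
    simpa [setIntegral_const, smul_eq_mul, measureReal_def] using this
  have hmid : (volume (A \ B)).toReal * Real.log (1 / r)
      ≤ (volume (B \ A)).toReal * Real.log (1 / r) :=
    mul_le_mul_of_nonneg_right (ENNReal.toReal_mono hdiffBfin.ne hmeas_le) hlognn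
  rw [← integral_inter_add_diff hB hint, ← integral_inter_add_diff hA hintB,
    Set.inter_comm B A]
  exact add_le_add_right (hub.trans (hmid.trans hlb)) _
end

section
/- Let n ≥ 1 be a natural number and let A ⊆ ℝⁿ be a measurable set with 0 < λ(A) ≤ λ(B_1(0)) such that y ↦ log(1/‖y‖) is Lebesgue-integrable on A. Then (1/λ(A)) ∫_A log(1/‖y‖) dy ≤ 1/n + (1/n)·log(λ(B_1(0))/λ(A)). -/
open Real MeasureTheory Set Metric


lemma hasDerivAt_G (n : ℕ) (hn : 1 ≤ n) {t : ℝ} (ht : 0 < t) :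
    HasDerivAt (fun t : ℝ => t ^ n / (n:ℝ)^2 - t ^ n * Real.log t / n)
      (t ^ (n - 1) * Real.log (1 / t)) t := by
  obtain ⟨m, rfl⟩ : ∃ m, n = m + 1 := ⟨n - 1, by omega⟩
  have h1 : HasDerivAt (fun t : ℝ => t ^ (m+1)) (((m:ℝ)+1) * t ^ m) t := by
    simpa using hasDerivAt_pow (m+1) t
  have h2 : HasDerivAt Real.log t⁻¹ t := Real.hasDerivAt_log ht.ne'
  have h3 := h1.mul h2
  have h4 := (h1.div_const (((m:ℝ)+1)^2)).sub (h3.div_const ((m:ℝ)+1))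
  have heq : ((m:ℝ) + 1) * t ^ m / ((m:ℝ) + 1) ^ 2 - (((m:ℝ) + 1) * t ^ m * Real.log t + t ^ (m + 1) * t⁻¹) / ((m:ℝ) + 1)
      = t ^ (m + 1 - 1) * Real.log (1 / t) := by
    have hm : ((m:ℝ) + 1) ≠ 0 := by positivity
    simp only [Nat.add_sub_cancel, one_div, Real.log_inv, pow_succ]
    field_simp
    ring
  rw [heq] at h4
  have hfun : (fun t : ℝ => t ^ (m+1) / (((m+1:ℕ)):ℝ)^2 - t ^ (m+1) * Real.log t / ((m+1:ℕ):ℝ))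
      = fun x : ℝ => x ^ (m + 1) / ((m:ℝ) + 1) ^ 2 - x ^ (m + 1) * Real.log x / ((m:ℝ) + 1) := by
    funext x; push_cast; ring
  rw [hfun]
  exact h4

lemma contG (n : ℕ) (hn : 1 ≤ n) (r : ℝ) :
    ContinuousOn (fun t : ℝ => t ^ n / (n:ℝ)^2 - t ^ n * Real.log t / n) (Icc 0 r) := by
  obtain ⟨m, rfl⟩ : ∃ m, n = m + 1 := ⟨n - 1, by omega⟩
  have hc : Continuous fun t : ℝ => t ^ (m+1) / ((m:ℝ)+1)^2 - t ^ m * (t * Real.log t) / ((m:ℝ)+1) :=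
    ((continuous_pow (m+1)).div_const _).sub
      (((continuous_pow m).mul Real.continuous_mul_log).div_const _)
  apply (hc.continuousOn : ContinuousOn _ (Icc 0 r)).congr
  intro t _
  push_cast
  ring

lemma nonneg_g (n : ℕ) {r t : ℝ} (hr1 : r ≤ 1) (ht : t ∈ Ioo 0 r) :
    0 ≤ t ^ (n - 1) * Real.log (1 / t) := by
  apply mul_nonneg (pow_nonneg ht.1.le _)
  apply Real.log_nonneg
  rw [le_div_iff₀ ht.1]
  simpa using ht.2.le.trans hr1

lemma integrableOn_oneDim (n : ℕ) (hn : 1 ≤ n) {r : ℝ} (hr : 0 < r) (hr1 : r ≤ 1) :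
    IntegrableOn (fun t : ℝ => t ^ (n-1) * Real.log (1/t)) (Ioc 0 r) :=
  intervalIntegral.integrableOn_deriv_of_nonneg (contG n hn r)
    (fun t ht => hasDerivAt_G n hn ht.1) (fun t ht => nonneg_g n hr1 ht)

lemma integral_oneDim (n : ℕ) (hn : 1 ≤ n) {r : ℝ} (hr : 0 < r) (hr1 : r ≤ 1) :
    ∫ t in Ioo 0 r, t ^ (n-1) * Real.log (1/t) = r^n/(n:ℝ)^2 - r^n * Real.log r / n := by
  rw [← integral_Ioc_eq_integral_Ioo, ← intervalIntegral.integral_of_le hr.le]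
  rw [intervalIntegral.integral_eq_sub_of_hasDeriv_right_of_le hr.le (contG n hn r)
    (fun t ht => (hasDerivAt_G n hn ht.1).hasDerivWithinAt)
    ((intervalIntegrable_iff_integrableOn_Ioc_of_le hr.le).mpr (integrableOn_oneDim n hn hr hr1))]
  rw [zero_pow (by omega : n ≠ 0)]
  ring

lemma integrable_fun_norm_addHaar {E : Type*} [NormedAddCommGroup E] [NormedSpace ℝ E]
    [MeasurableSpace E] [BorelSpace E] [Nontrivial E] [FiniteDimensional ℝ E]
    (μ : Measure E) [μ.IsAddHaarMeasure] {f : ℝ → ℝ} (hf : Measurable f)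
    (hpos : ∀ t, 0 ≤ f t)
    (hint : IntegrableOn (fun y => y ^ (Module.finrank ℝ E - 1) * f y) (Ioi 0)) :
    Integrable (fun x => f ‖x‖) μ := by
  set d := Module.finrank ℝ E with hd
  refine ⟨(hf.comp measurable_norm).aestronglyMeasurable, ?_⟩
  rw [hasFiniteIntegral_iff_norm]
  have key : ∫⁻ x, ENNReal.ofReal ‖f ‖x‖‖ ∂μ
      = μ.toSphere univ * ∫⁻ y in Ioi (0:ℝ), ENNReal.ofReal (y ^ (d - 1)) * ENNReal.ofReal (f y) := by
    have h0 : ∀ x : E, ENNReal.ofReal ‖f ‖x‖‖ = ENNReal.ofReal (f ‖x‖) := by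
      intro x; rw [Real.norm_of_nonneg (hpos _)]
    simp only [h0]
    calc ∫⁻ x, ENNReal.ofReal (f ‖x‖) ∂μ
        = ∫⁻ x in ({(0:E)}ᶜ), ENNReal.ofReal (f ‖x‖) ∂μ := by
          rw [MeasureTheory.restrict_compl_singleton]
      _ = ∫⁻ x : ({(0:E)}ᶜ : Set E), ENNReal.ofReal (f ‖x.1‖) ∂(μ.comap Subtype.val) :=
          (lintegral_subtype_comap (measurableSet_singleton _).compl
            (fun x => ENNReal.ofReal (f ‖x‖))).symm
      _ = ∫⁻ p : (Metric.sphere (0:E) 1) × Ioi (0:ℝ), ENNReal.ofReal (f p.2.1)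
            ∂(μ.toSphere.prod (Measure.volumeIoiPow (d - 1))) := by
          refine Eq.trans ?_ ((Measure.measurePreserving_homeomorphUnitSphereProd μ).lintegral_comp_emb
            (Homeomorph.measurableEmbedding _) (fun p => ENNReal.ofReal (f p.2.1)))
          simp only [homeomorphUnitSphereProd_apply_snd_coe]
      _ = μ.toSphere univ * ∫⁻ y : Ioi (0:ℝ), ENNReal.ofReal (f y.1)
            ∂(Measure.volumeIoiPow (d - 1)) := by
          have hmeas : AEMeasurable (fun p : (Metric.sphere (0:E) 1) × Ioi (0:ℝ) =>
              ENNReal.ofReal (f p.2.1))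
              (μ.toSphere.prod (Measure.volumeIoiPow (d - 1))) :=
            ((hf.comp (measurable_subtype_coe.comp measurable_snd)).ennreal_ofReal).aemeasurable
          rw [MeasureTheory.lintegral_prod _ hmeas]
          have : ∀ x : (Metric.sphere (0:E) 1), ∫⁻ y : Ioi (0:ℝ), ENNReal.ofReal (f ((x, y).2 : Ioi (0:ℝ)).1) ∂(Measure.volumeIoiPow (d - 1)) = ∫⁻ y : Ioi (0:ℝ), ENNReal.ofReal (f y.1) ∂(Measure.volumeIoiPow (d - 1)) := fun x => rfl
          simp only [this, lintegral_const, mul_comm]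
      _ = μ.toSphere univ * ∫⁻ y in Ioi (0:ℝ), ENNReal.ofReal (y ^ (d - 1)) * ENNReal.ofReal (f y) := by
          congr 1
          have hg : Measurable fun (y : Ioi (0:ℝ)) => ENNReal.ofReal (f y.1) :=
            (hf.comp measurable_subtype_coe).ennreal_ofReal
          have hw : Measurable fun (y : Ioi (0:ℝ)) => ENNReal.ofReal (y.1 ^ (d - 1)) :=
            (measurable_subtype_coe.pow_const _).ennreal_ofReal
          rw [Measure.volumeIoiPow, lintegral_withDensity_eq_lintegral_mul _ hw hg]
          exact lintegral_subtype_comap measurableSet_Ioi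
            (fun y => ENNReal.ofReal (y ^ (d - 1)) * ENNReal.ofReal (f y))
  rw [key]
  have hfin : ∫⁻ y in Ioi (0:ℝ), ENNReal.ofReal (y ^ (d - 1)) * ENNReal.ofReal (f y) < ⊤ := by
    have hb := (hasFiniteIntegral_iff_norm _).mp hint.2
    refine lt_of_le_of_lt ?_ hb
    apply setLIntegral_mono' measurableSet_Ioi
    intro y hy
    rw [← ENNReal.ofReal_mul (pow_nonneg (le_of_lt hy) _)]
    exact ENNReal.ofReal_le_ofReal (le_abs_self _)
  exact ENNReal.mul_lt_top (measure_lt_top _ _) hfin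

lemma ball_facts (n : ℕ) (hn : 1 ≤ n) {r : ℝ} (hr : 0 < r) (hr1 : r ≤ 1) :
    IntegrableOn (fun y : EuclideanSpace ℝ (Fin n) => Real.log (1/‖y‖))
      (ball (0 : EuclideanSpace ℝ (Fin n)) r) ∧
    ∫ y in ball (0 : EuclideanSpace ℝ (Fin n)) r, Real.log (1/‖y‖)
      = (volume (ball (0 : EuclideanSpace ℝ (Fin n)) r)).toReal * (Real.log (1/r) + 1/n) := by
  set E := EuclideanSpace ℝ (Fin n)
  haveI : Nontrivial E := by
    apply Module.nontrivial_of_finrank_pos (R := ℝ)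
    rw [finrank_euclideanSpace_fin]; omega
  have hdim : Module.finrank ℝ E = n := finrank_euclideanSpace_fin
  set g : ℝ → ℝ := (Ioo (0:ℝ) r).indicator (fun t => Real.log (1/t)) with hg
  have hgmeas : Measurable g := by
    apply Measurable.indicator _ measurableSet_Ioo
    simp only [one_div]
    exact Real.measurable_log.comp measurable_inv
  have hgnonneg : ∀ t, 0 ≤ g t := by
    intro t
    apply Set.indicator_nonneg
    intro t ht
    apply Real.log_nonneg
    rw [le_div_iff₀ ht.1]
    simpa using ht.2.le.trans hr1
  have h_eq : (fun x : E => g ‖x‖)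
      = (ball (0:E) r).indicator (fun y => Real.log (1/‖y‖)) := by
    funext x
    by_cases hx : x = 0
    · subst hx
      simp [hg, Set.indicator, mem_ball_self hr, lt_irrefl]
    · have hx0 : 0 < ‖x‖ := norm_pos_iff.mpr hx
      simp only [hg, Set.indicator, mem_Ioo, mem_ball_zero_iff, hx0, true_and]
  have h_eq2 : (fun y : ℝ => y ^ (n-1) * g y)
      = (Ioo (0:ℝ) r).indicator (fun y => y ^ (n-1) * Real.log (1/y)) := by
    funext y
    by_cases hy : y ∈ Ioo (0:ℝ) r <;> simp [hg, Set.indicator, hy]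
  have hint1D : IntegrableOn (fun y : ℝ => y ^ (n-1) * g y) (Ioi 0) := by
    rw [h_eq2]
    exact (((integrable_indicator_iff measurableSet_Ioo).mpr
      ((integrableOn_oneDim n hn hr hr1).mono_set Ioo_subset_Ioc_self))).integrableOn
  have hInt : Integrable (fun x : E => g ‖x‖) volume := by
    apply integrable_fun_norm_addHaar volume hgmeas hgnonneg
    rw [hdim]; exact hint1D
  have hIntBall : IntegrableOn (fun y : E => Real.log (1/‖y‖)) (ball (0:E) r) := by
    rw [h_eq] at hInt
    exact (integrable_indicator_iff measurableSet_ball).mp hInt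
  refine ⟨hIntBall, ?_⟩
  have hvolball : (volume (ball (0:E) r)).toReal = r^n * (volume (ball (0:E) 1)).toReal := by
    rw [Measure.addHaar_ball volume (0:E) hr.le, hdim, ENNReal.toReal_mul,
      ENNReal.toReal_ofReal (by positivity)]
  have step1 : ∫ y in ball (0:E) r, Real.log (1/‖y‖) = ∫ x : E, g ‖x‖ := by
    rw [h_eq, integral_indicator measurableSet_ball]
  have step2 : ∫ x : E, g ‖x‖ ∂volume
      = n • (volume (ball (0:E) 1)).toReal • ∫ y in Ioi (0:ℝ), y ^ (n - 1) • g y := by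
    rw [integral_fun_norm_addHaar volume g, hdim]
    rfl
  have step3 : ∫ y in Ioi (0:ℝ), y ^ (n - 1) • g y
      = r^n/(n:ℝ)^2 - r^n * Real.log r / n := by
    simp only [smul_eq_mul]
    rw [h_eq2, setIntegral_indicator measurableSet_Ioo,
      inter_eq_self_of_subset_right Ioo_subset_Ioi_self]
    exact integral_oneDim n hn hr hr1
  have hn0 : (n:ℝ) ≠ 0 := Nat.cast_ne_zero.mpr (by omega)
  rw [step1, step2, step3, hvolball, nsmul_eq_mul, smul_eq_mul, one_div, Real.log_inv]
  field_simp
  ring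

theorem log_average_set_le (n : ℕ) (hn : 1 ≤ n)
    (A : Set (EuclideanSpace ℝ (Fin n))) (hA : MeasurableSet A)
    (hpos : 0 < volume A)
    (hvol : volume A ≤ volume (Metric.ball (0 : EuclideanSpace ℝ (Fin n)) 1))
    (hint : IntegrableOn (fun y : EuclideanSpace ℝ (Fin n) => Real.log (1 / ‖y‖)) A) :
    (1 / (volume A).toReal) * ∫ y in A, Real.log (1 / ‖y‖)
      ≤ 1 / (n : ℝ) + (1 / (n : ℝ)) * Real.log
          ((volume (Metric.ball (0 : EuclideanSpace ℝ (Fin n)) 1)).toReal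
            / (volume A).toReal) := by
  haveI : Nontrivial (EuclideanSpace ℝ (Fin n)) := by
    apply Module.nontrivial_of_finrank_pos (R := ℝ)
    rw [finrank_euclideanSpace_fin]; omega
  have hdim : Module.finrank ℝ (EuclideanSpace ℝ (Fin n)) = n := finrank_euclideanSpace_fin
  have hn0 : (n:ℝ) ≠ 0 := Nat.cast_ne_zero.mpr (by omega)
  set V : ℝ := (volume (ball (0:(EuclideanSpace ℝ (Fin n))) 1)).toReal with hV
  set v : ℝ := (volume A).toReal with hv
  have hBfin : volume (ball (0:(EuclideanSpace ℝ (Fin n))) 1) < ⊤ := measure_ball_lt_top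
  have hAfin : volume A < ⊤ := hvol.trans_lt hBfin
  have hVpos : 0 < V := ENNReal.toReal_pos (measure_ball_pos volume 0 one_pos).ne' hBfin.ne
  have hvpos : 0 < v := ENNReal.toReal_pos hpos.ne' hAfin.ne
  have hvV : v ≤ V := ENNReal.toReal_le_toReal hAfin.ne hBfin.ne |>.mpr hvol
  set r : ℝ := (v / V) ^ ((n:ℝ)⁻¹) with hrdef
  have hdivpos : 0 < v / V := div_pos hvpos hVpos
  have hr : 0 < r := Real.rpow_pos_of_pos hdivpos _
  have hr1 : r ≤ 1 := Real.rpow_le_one hdivpos.le ((div_le_one hVpos).mpr hvV)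
    (by positivity)
  have hrn : r ^ n = v / V := by
    rw [hrdef, ← Real.rpow_natCast ((v / V) ^ ((n:ℝ)⁻¹)) n, ← Real.rpow_mul hdivpos.le,
      inv_mul_cancel₀ hn0, Real.rpow_one]
  set B : Set (EuclideanSpace ℝ (Fin n)) := ball (0:(EuclideanSpace ℝ (Fin n))) r with hB
  have hvolB : volume B = volume A := by
    calc volume B = ENNReal.ofReal (r ^ n) * volume (ball (0:(EuclideanSpace ℝ (Fin n))) 1) := by
          rw [hB, Measure.addHaar_ball volume (0:(EuclideanSpace ℝ (Fin n))) hr.le, hdim]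
      _ = ENNReal.ofReal (v / V) * ENNReal.ofReal V := by
          rw [hrn, hV, ENNReal.ofReal_toReal hBfin.ne]
      _ = ENNReal.ofReal (v / V * V) := (ENNReal.ofReal_mul hdivpos.le).symm
      _ = ENNReal.ofReal v := by rw [div_mul_cancel₀ _ hVpos.ne']
      _ = volume A := by rw [hv, ENNReal.ofReal_toReal hAfin.ne]
  obtain ⟨hIntB, hIB⟩ := ball_facts n hn hr hr1
  have hvolBto : (volume B).toReal = v := by rw [hvolB]
  set c : ℝ := Real.log (1/r) with hc
  set f : (EuclideanSpace ℝ (Fin n)) → ℝ := fun y => Real.log (1/‖y‖) with hf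
  -- measure of symmetric differences agree
  have hBfin' : volume B < ⊤ := hvolB ▸ hAfin
  have hmeq : volume (A \ B) = volume (B \ A) := by
    have m1 := measure_inter_add_diff (μ := volume) A (measurableSet_ball (x := (0:(EuclideanSpace ℝ (Fin n)))) (ε := r))
    have m2 := measure_inter_add_diff (μ := volume) B hA
    rw [inter_comm B A] at m2
    have : volume (A ∩ B) + volume (A \ B) = volume (A ∩ B) + volume (B \ A) := by
      rw [m1, m2, hvolB]
    exact (ENNReal.add_right_inj ((measure_mono inter_subset_left).trans_lt hAfin).ne).mp this
  -- upper bound on A \ B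
  have hup : ∫ y in A \ B, f y ≤ (volume (A \ B)).toReal * c := by
    have hconst : IntegrableOn (fun _ : (EuclideanSpace ℝ (Fin n)) => c) (A \ B) volume :=
      integrableOn_const ((measure_mono diff_subset).trans_lt hAfin).ne
    have := setIntegral_mono_on (hint.mono_set diff_subset) hconst
      (hA.diff measurableSet_ball) (fun y hy => ?_)
    · rwa [setIntegral_const, smul_eq_mul] at this
    · have hyr : r ≤ ‖y‖ := by
        by_contra h
        exact hy.2 (mem_ball_zero_iff.mpr (lt_of_not_ge h))
      exact Real.log_le_log (one_div_pos.mpr (hr.trans_le hyr)) (one_div_le_one_div_of_le hr hyr)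
  -- lower bound on B \ A
  have hlow : (volume (B \ A)).toReal * c ≤ ∫ y in B \ A, f y := by
    have hconst : IntegrableOn (fun _ : (EuclideanSpace ℝ (Fin n)) => c) (B \ A) volume :=
      integrableOn_const ((measure_mono diff_subset).trans_lt hBfin').ne
    have hae : ∀ᵐ (y : (EuclideanSpace ℝ (Fin n))) ∂volume, y ∈ B \ A → c ≤ f y := by
      have h0 : ∀ᵐ (y : (EuclideanSpace ℝ (Fin n))) ∂volume, y ≠ 0 := by
        rw [ae_iff]
        simpa using measure_singleton (0 : (EuclideanSpace ℝ (Fin n)))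
      filter_upwards [h0] with y hy0 hyBA
      have hyn : 0 < ‖y‖ := norm_pos_iff.mpr hy0
      have hyr : ‖y‖ ≤ r := (mem_ball_zero_iff.mp hyBA.1).le
      exact Real.log_le_log (by positivity) (one_div_le_one_div_of_le hyn hyr)
    have := setIntegral_mono_on_ae hconst (hIntB.mono_set diff_subset)
      ((measurableSet_ball).diff hA) hae
    rwa [setIntegral_const, smul_eq_mul] at this
  -- combine
  have hsplitA := integral_inter_add_diff (μ := volume)
    (measurableSet_ball (x := (0:(EuclideanSpace ℝ (Fin n)))) (ε := r)) hint
  have hsplitB := integral_inter_add_diff (μ := volume) hA hIntB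
  rw [inter_comm B A] at hsplitB
  have hAB : ∫ y in A, f y ≤ ∫ y in B, f y := by
    rw [← hsplitA, ← hsplitB]
    have heq : (volume (A \ B)).toReal = (volume (B \ A)).toReal := by rw [hmeq]
    rw [heq] at hup
    linarith [hup, hlow]
  have hfinal : ∫ y in A, f y ≤ v * (c + 1/n) := by
    rw [← hvolBto, ← hIB]; exact hAB
  have hcval : c = (1/(n:ℝ)) * Real.log (V / v) := by
    have hVv : Real.log (V / v) = - Real.log (v / V) := by
      rw [← Real.log_inv, inv_div]
    rw [hc, one_div, Real.log_inv, hrdef, Real.log_rpow hdivpos, hVv]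
    ring
  calc (1 / v) * ∫ y in A, f y ≤ (1 / v) * (v * (c + 1/n)) := by
        apply mul_le_mul_of_nonneg_left hfinal (by positivity)
    _ = c + 1/n := by field_simp
    _ = 1 / (n:ℝ) + (1/(n:ℝ)) * Real.log (V / v) := by rw [hcval]; ring
end
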